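/- Let G be an internal groupoid in the category of Leibniz algebras. Then the restriction d₁ : ker d₀ → Ob(G), together with the action x·g = [ε(x),g], g·x = [g,ε(x)] of Ob(G) on ker d₀, is a crossed module of Leibniz algebras: ∂(x·g) = [x, ∂g], ∂(g·x) = [∂g, x], g·∂(g₁) = [g,g₁], and ∂(g₁)·g = [g₁,g] for all x ∈ Ob(G), g, g₁ ∈ ker d₀, where ∂ = d₁|_{ker d₀}. -/

import Mathlib

/-- A (right) Leibniz algebra structure on a `k`-vector space `L`: a bilinear
bracket satisfying the Leibniz identity `[x,[y,z]] = [[x,y],z] - [[x,z],y]`. -/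
structure LeibnizBracket (k : Type*) (L : Type*) [Field k] [AddCommGroup L] [Module k L] where
  br : L →ₗ[k] L →ₗ[k] L
  leibniz : ∀ x y z : L, br x (br y z) = br (br x y) z - br (br x z) y

/-- An internal category (= internal groupoid) in the category of Leibniz algebras:
Leibniz algebras `G` (morphisms) and `Ob` (objects), with structural maps
`d0, d1 : G → Ob`, `e : Ob → G` and a partial composition, all of which are
morphisms of Leibniz algebras (linear and bracket preserving), satisfying the
category axioms; being a morphism, the composition satisfies the interchange laws. -/
structure LeibnizInternalCat (k G Ob : Type*) [Field k] [AddCommGroup G] [Module k G]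
    [AddCommGroup Ob] [Module k Ob] where
  BG : LeibnizBracket k G
  BOb : LeibnizBracket k Ob
  d0 : G →ₗ[k] Ob
  d1 : G →ₗ[k] Ob
  e : Ob →ₗ[k] G
  d0e : ∀ x, d0 (e x) = x
  d1e : ∀ x, d1 (e x) = x
  d0br : ∀ g g', d0 (BG.br g g') = BOb.br (d0 g) (d0 g')
  d1br : ∀ g g', d1 (BG.br g g') = BOb.br (d1 g) (d1 g')
  ebr : ∀ x y, e (BOb.br x y) = BG.br (e x) (e y)
  /-- composition `h ∘ g`, defined when `d1 g = d0 h` -/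
  comp : (h g : G) → d1 g = d0 h → G
  d0comp : ∀ h g hc, d0 (comp h g hc) = d0 g
  d1comp : ∀ h g hc, d1 (comp h g hc) = d1 h
  comp_id : ∀ g (hc : d1 (e (d0 g)) = d0 g), comp g (e (d0 g)) hc = g
  id_comp : ∀ g (hc : d1 g = d0 (e (d1 g))), comp (e (d1 g)) g hc = g
  assoc : ∀ f h g hc1 hc2 hc3 hc4, comp f (comp h g hc1) hc2 = comp (comp f h hc3) g hc4
  add_comp : ∀ h g h' g' hc hc' hcc,
    comp (h + h') (g + g') hcc = comp h g hc + comp h' g' hc'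
  smul_comp : ∀ (c : k) h g hc hcc, comp (c • h) (c • g) hcc = c • comp h g hc
  br_comp : ∀ h g h' g' hc hc' hcc,
    comp (BG.br h h') (BG.br g g') hcc = BG.br (comp h g hc) (comp h' g' hc')

/-!
In an internal category of vector spaces the composition is forced by linearity:
`h ∘ g = h + g - ε (d₁ g)`. Applying this to the interchange law
`[h, h'] ∘ [g, g'] = [h ∘ g, h' ∘ g']` for the composable pairs `(g, 0)` and `(ε (d₁ g₁), g₁)`,
with `d₀ g = 0`, turns it into `[g, ε (d₁ g₁)] = [g, g₁]`; symmetrically on the other side.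
(LXM1) only uses that `d₁` preserves brackets and `d₁ ∘ ε = id`.
-/

namespace LeibnizInternalCat

variable {k G Ob : Type*} [Field k] [AddCommGroup G] [Module k G]
    [AddCommGroup Ob] [Module k Ob] (C : LeibnizInternalCat k G Ob)

theorem comp_congr {h g h' g' : G} (hh : h = h') (hg : g = g')
    (hc : C.d1 g = C.d0 h) (hc' : C.d1 g' = C.d0 h') :
    C.comp h g hc = C.comp h' g' hc' := by
  subst hh hg
  rfl

theorem zero_comp_of_d1_eq_zero {g : G} (hg : C.d1 g = 0) (hc : C.d1 g = C.d0 0) :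
    C.comp 0 g hc = g := by
  have hc' : C.d1 g = C.d0 (C.e (C.d1 g)) := by rw [C.d0e]
  calc C.comp 0 g hc = C.comp (C.e (C.d1 g)) g hc' :=
        C.comp_congr (by rw [hg, map_zero]) rfl hc hc'
    _ = g := C.id_comp g hc'

theorem comp_eq_add_sub_e_d1 (h g : G) (hc : C.d1 g = C.d0 h) :
    C.comp h g hc = h + g - C.e (C.d1 g) := by
  have hc₁ : C.d1 (C.e (C.d0 h)) = C.d0 h := C.d1e _
  have hc₂ : C.d1 (g - C.e (C.d1 g)) = C.d0 0 := by simp [C.d1e]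
  have hc₁₂ : C.d1 (C.e (C.d0 h) + (g - C.e (C.d1 g))) = C.d0 (h + 0) := by
    simp [hc]
  calc C.comp h g hc = C.comp (h + 0) (C.e (C.d0 h) + (g - C.e (C.d1 g))) hc₁₂ :=
        C.comp_congr (add_zero h).symm (by rw [← hc]; abel) hc hc₁₂
    _ = C.comp h (C.e (C.d0 h)) hc₁ + C.comp 0 (g - C.e (C.d1 g)) hc₂ := C.add_comp ..
    _ = h + (g - C.e (C.d1 g)) := by
        rw [C.comp_id, C.zero_comp_of_d1_eq_zero (by simp [C.d1e])]
    _ = h + g - C.e (C.d1 g) := by abel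

theorem br_e_d1_right {g : G} (hg : C.d0 g = 0) (g₁ : G) :
    C.BG.br g (C.e (C.d1 g₁)) = C.BG.br g g₁ := by
  have hc₀ : C.d1 0 = C.d0 g := by rw [hg, map_zero]
  have hc₁ : C.d1 g₁ = C.d0 (C.e (C.d1 g₁)) := by rw [C.d0e]
  have hc : C.d1 (C.BG.br 0 g₁) = C.d0 (C.BG.br g (C.e (C.d1 g₁))) := by
    simp [C.d0br, hg]
  have key := C.br_comp g 0 (C.e (C.d1 g₁)) g₁ hc₀ hc₁ hc
  simpa [comp_eq_add_sub_e_d1] using key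

theorem br_e_d1_left {g : G} (hg : C.d0 g = 0) (g₁ : G) :
    C.BG.br (C.e (C.d1 g₁)) g = C.BG.br g₁ g := by
  have hc₁ : C.d1 g₁ = C.d0 (C.e (C.d1 g₁)) := by rw [C.d0e]
  have hc₀ : C.d1 0 = C.d0 g := by rw [hg, map_zero]
  have hc : C.d1 (C.BG.br g₁ 0) = C.d0 (C.BG.br (C.e (C.d1 g₁)) g) := by
    simp [C.d0br, hg]
  have key := C.br_comp (C.e (C.d1 g₁)) g₁ g 0 hc₁ hc₀ hc
  simpa [comp_eq_add_sub_e_d1] using key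

end LeibnizInternalCat

/-- `(ker d₀, Ob(G), d₁|_{ker d₀})` with the action `x·g = [ε x, g]`, `g·x = [g, ε x]`
is a crossed module of Leibniz algebras: (LXM1) and (LXM2) hold. -/
theorem ker_d0_d1_crossed_module (k G Ob : Type*) [Field k] [AddCommGroup G] [Module k G]
    [AddCommGroup Ob] [Module k Ob] (C : LeibnizInternalCat k G Ob) :
    -- (LXM1)  ∂(x·g) = [x, ∂g] and ∂(g·x) = [∂g, x]
    (∀ (x : Ob) (g : G), C.d0 g = 0 →
      C.d1 (C.BG.br (C.e x) g) = C.BOb.br x (C.d1 g)) ∧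
    (∀ (g : G) (x : Ob), C.d0 g = 0 →
      C.d1 (C.BG.br g (C.e x)) = C.BOb.br (C.d1 g) x) ∧
    -- (LXM2)  g·∂(g₁) = [g,g₁] and ∂(g₁)·g = [g₁,g]
    (∀ (g g1 : G), C.d0 g = 0 → C.d0 g1 = 0 →
      C.BG.br g (C.e (C.d1 g1)) = C.BG.br g g1) ∧
    (∀ (g g1 : G), C.d0 g = 0 → C.d0 g1 = 0 →
      C.BG.br (C.e (C.d1 g1)) g = C.BG.br g1 g) :=
  ⟨fun x g _ => by rw [C.d1br, C.d1e],
    fun g x _ => by rw [C.d1br, C.d1e],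
    fun _ g₁ hg _ => C.br_e_d1_right hg g₁,
    fun _ g₁ hg _ => C.br_e_d1_left hg g₁⟩
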